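/- For every u > 0, every s ∈ ℝ, and every family of nonnegative reals (c_k) indexed by the nonzero elements k of ℤ², one has Σ_{k ≠ 0} ‖k‖² · ((J⁰)'(‖k‖·u))² · (1 + ‖k‖²)^s · c_k ≤ (1/u) · Σ_{k ≠ 0} (1 + ‖k‖²)^{s + 1/2} · c_k (sums taken as tsums in [0,∞]). This is the Fourier-coefficient form of the estimate ‖∂_u (J⁰_u Φ)‖_{H^s} ≤ u^{-1/2} ‖Φ‖_{H^{s+1/2}} for mean-zero Φ on the torus 𝕋². -/

import Mathlib

open MeasureTheory Real ENNReal

/-- The zeroth-order Bessel function `J⁰(k) = (1/π) ∫₀^π cos(k cos θ) dθ`. -/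
noncomputable def J0 (k : ℝ) : ℝ :=
  (1 / Real.pi) * ∫ θ in (0:ℝ)..Real.pi, Real.cos (k * Real.cos θ)

/-- The Euclidean norm of `k ∈ ℤ²`. -/
noncomputable def eNorm (k : ℤ × ℤ) : ℝ :=
  Real.sqrt ((k.1 : ℝ) ^ 2 + (k.2 : ℝ) ^ 2)

/-!
Since `(J⁰)' = -J¹`, the estimate holds termwise once `x · J¹(x)² ≤ 1` for all real `x`, because
then `‖k‖² J¹(‖k‖u)² ≤ ‖k‖ / u ≤ (1 + ‖k‖²)^{1/2} / u`. For `x ≤ 1` this follows from `|J¹| ≤ 1`.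
On `x > 1/2` the recurrence `(J¹)' = J⁰ - J¹ / x` gives the function
`R(x) = x (x (J⁰² + J¹²) - J⁰ J¹) / (x - 1/2)` the derivative `-x (J⁰ - J¹)² / (2 (x - 1/2)²)`,
and `R(x) ≥ x J¹(x)²`. Hence `x J¹(x)² ≤ R(1)` for `x ≥ 1`, and `R(1) ≤ 1` follows from the
estimates `J⁰(1) ≈ 3/4`, `J¹(1) ≈ 7/16` obtained by integrating the degree-four Taylor bounds
of `cos` and `sin`.
-/

theorem hasDerivAt_integral_mul_comp_mul {f f' g h : ℝ → ℝ} {M a b : ℝ}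
    (hf : ∀ y, HasDerivAt f (f' y) y) (hf' : Continuous f') (hf'M : ∀ y, |f' y| ≤ M)
    (hg : Continuous g) (hh : Continuous h) (x : ℝ) :
    HasDerivAt (fun x => ∫ θ in a..b, g θ * f (x * h θ))
      (∫ θ in a..b, g θ * h θ * f' (x * h θ)) x := by
  have hfc : Continuous f := continuous_iff_continuousAt.2 fun y => (hf y).continuousAt
  refine (intervalIntegral.hasDerivAt_integral_of_dominated_loc_of_deriv_le
    (F := fun x θ => g θ * f (x * h θ)) (F' := fun x θ => g θ * h θ * f' (x * h θ))
    (bound := fun θ => |g θ * h θ| * M) Filter.univ_mem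
    (Filter.Eventually.of_forall fun _ => (by fun_prop : Continuous _).aestronglyMeasurable)
    ((by fun_prop : Continuous _).intervalIntegrable _ _)
    ((by fun_prop : Continuous _).aestronglyMeasurable)
    (Filter.Eventually.of_forall fun θ _ y _ => ?_)
    ((by fun_prop : Continuous _).intervalIntegrable _ _)
    (Filter.Eventually.of_forall fun θ _ y _ => ?_)).2
  · rw [norm_mul, Real.norm_eq_abs]
    exact mul_le_mul_of_nonneg_left (hf'M _) (abs_nonneg _)
  · have := ((hf (y * h θ)).comp y ((hasDerivAt_id y).mul_const (h θ))).const_mul (g θ)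
    simpa [mul_comm, mul_left_comm, mul_assoc] using this

noncomputable def J1 (x : ℝ) : ℝ :=
  (1 / π) * ∫ θ in (0:ℝ)..π, cos θ * sin (x * cos θ)

theorem hasDerivAt_J0 (x : ℝ) : HasDerivAt J0 (-J1 x) x := by
  have := (hasDerivAt_integral_mul_comp_mul (a := 0) (b := π) (g := fun _ => 1)
    Real.hasDerivAt_cos continuous_sin.neg (fun y => by simpa using abs_sin_le_one y)
    continuous_const continuous_cos x).const_mul (1 / π)
  simp only [one_mul, mul_neg, intervalIntegral.integral_neg] at this
  exact this

theorem hasDerivAt_J1_integral (x : ℝ) :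
    HasDerivAt J1 ((1 / π) * ∫ θ in (0:ℝ)..π, cos θ ^ 2 * cos (x * cos θ)) x := by
  have := (hasDerivAt_integral_mul_comp_mul (a := 0) (b := π) Real.hasDerivAt_sin
    continuous_cos abs_cos_le_one continuous_cos continuous_cos x).const_mul (1 / π)
  simp only [← sq] at this
  exact this

theorem mul_integral_sin_sq_mul_cos (x : ℝ) :
    x * ∫ θ in (0:ℝ)..π, sin θ ^ 2 * cos (x * cos θ)
      = ∫ θ in (0:ℝ)..π, cos θ * sin (x * cos θ) := by
  have hderiv : ∀ θ ∈ Set.uIcc 0 π, HasDerivAt (fun t => sin t * sin (x * cos t))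
      (cos θ * sin (x * cos θ) - x * (sin θ ^ 2 * cos (x * cos θ))) θ := fun θ _ => by
    refine ((hasDerivAt_sin θ).mul
      ((hasDerivAt_sin _).comp θ ((hasDerivAt_cos θ).const_mul x))).congr_deriv ?_
    simp only [Function.comp_apply]
    ring
  have hFTC := intervalIntegral.integral_eq_sub_of_hasDerivAt hderiv
    ((by fun_prop : Continuous _).intervalIntegrable _ _)
  rw [intervalIntegral.integral_sub ((by fun_prop : Continuous _).intervalIntegrable _ _)
    ((by fun_prop : Continuous _).intervalIntegrable _ _), intervalIntegral.integral_const_mul]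
    at hFTC
  simp only [sin_zero, sin_pi, zero_mul, sub_zero] at hFTC
  linarith

theorem hasDerivAt_J1 {x : ℝ} (hx : x ≠ 0) : HasDerivAt J1 (J0 x - J1 x / x) x := by
  convert hasDerivAt_J1_integral x using 1
  have hcos_sq : ∀ θ,
      cos θ ^ 2 * cos (x * cos θ) = cos (x * cos θ) - sin θ ^ 2 * cos (x * cos θ) :=
    fun θ => by rw [cos_sq']; ring
  simp_rw [hcos_sq]
  rw [intervalIntegral.integral_sub ((by fun_prop : Continuous _).intervalIntegrable _ _)
    ((by fun_prop : Continuous _).intervalIntegrable _ _), J0, J1,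
    ← mul_integral_sin_sq_mul_cos x]
  field_simp

theorem integral_cos_sq_zero_pi : ∫ θ in (0:ℝ)..π, cos θ ^ 2 = π / 2 := by
  simp

theorem integral_cos_pow_four_zero_pi : ∫ θ in (0:ℝ)..π, cos θ ^ 4 = 3 * π / 8 := by
  rw [integral_cos_pow (n := 2), integral_cos_sq_zero_pi]
  simp only [cos_pi, sin_pi, mul_zero, sin_zero, sub_self, zero_div, zero_add]
  ring

theorem abs_inv_pi_mul_integral_le {F : ℝ → ℝ} (hF : Continuous F) {C : ℝ}
    (hFC : ∀ θ, |F θ| ≤ C * cos θ ^ 4) :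
    |(1 / π) * ∫ θ in (0:ℝ)..π, F θ| ≤ 3 * C / 8 := by
  have hint : |∫ θ in (0:ℝ)..π, F θ| ≤ C * (3 * π / 8) := calc
    _ ≤ ∫ θ in (0:ℝ)..π, |F θ| := intervalIntegral.abs_integral_le_integral_abs pi_pos.le
    _ ≤ ∫ θ in (0:ℝ)..π, C * cos θ ^ 4 :=
        intervalIntegral.integral_mono_on pi_pos.le (hF.abs.intervalIntegrable _ _)
          ((by fun_prop : Continuous _).intervalIntegrable _ _) fun θ _ => hFC θ
    _ = C * (3 * π / 8) := by
        rw [intervalIntegral.integral_const_mul, integral_cos_pow_four_zero_pi]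
  rw [abs_mul, abs_of_pos (by positivity), div_mul_eq_mul_div, one_mul, div_le_iff₀ pi_pos]
  linarith

theorem abs_J0_one_sub_le : |J0 1 - 3 / 4| ≤ 5 / 256 := by
  have hmain : ∫ θ in (0:ℝ)..π, (1 - cos θ ^ 2 / 2) = 3 * π / 4 := by
    rw [intervalIntegral.integral_sub intervalIntegrable_const
      ((by fun_prop : Continuous _).intervalIntegrable _ _), intervalIntegral.integral_div,
      integral_cos_sq_zero_pi]
    simp only [intervalIntegral.integral_const, sub_zero, smul_eq_mul, mul_one]
    ring
  have hsplit : J0 1 - 3 / 4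
      = (1 / π) * ∫ θ in (0:ℝ)..π, (cos (cos θ) - (1 - cos θ ^ 2 / 2)) := by
    rw [intervalIntegral.integral_sub ((by fun_prop : Continuous _).intervalIntegrable _ _)
      ((by fun_prop : Continuous _).intervalIntegrable _ _), hmain, J0]
    field_simp
  have hbound := abs_inv_pi_mul_integral_le (C := 5 / 96)
    (F := fun θ => cos (cos θ) - (1 - cos θ ^ 2 / 2)) (by fun_prop) fun θ => by
      simpa [(by decide : Even 4).pow_abs, mul_comm] using cos_bound (abs_cos_le_one θ)
  rw [hsplit]
  linarith

theorem abs_J1_one_sub_le : |J1 1 - 7 / 16| ≤ 3 / 800 := by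
  have hmain : ∫ θ in (0:ℝ)..π, (cos θ ^ 2 - cos θ ^ 4 / 6) = 7 * π / 16 := by
    rw [intervalIntegral.integral_sub ((by fun_prop : Continuous _).intervalIntegrable _ _)
      ((by fun_prop : Continuous _).intervalIntegrable _ _), intervalIntegral.integral_div,
      integral_cos_sq_zero_pi, integral_cos_pow_four_zero_pi]
    ring
  have hsplit : J1 1 - 7 / 16
      = (1 / π) * ∫ θ in (0:ℝ)..π,
          (cos θ * sin (cos θ) - (cos θ ^ 2 - cos θ ^ 4 / 6)) := by
    rw [intervalIntegral.integral_sub ((by fun_prop : Continuous _).intervalIntegrable _ _)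
      ((by fun_prop : Continuous _).intervalIntegrable _ _), hmain, J1]
    field_simp
  have hbound := abs_inv_pi_mul_integral_le (C := 1 / 100)
    (F := fun θ => cos θ * sin (cos θ) - (cos θ ^ 2 - cos θ ^ 4 / 6)) (by fun_prop)
    fun θ => by
      have hc := abs_cos_le_one θ
      have hsin := sin_bound hc
      have hfactor : cos θ * sin (cos θ) - (cos θ ^ 2 - cos θ ^ 4 / 6)
          = cos θ * (sin (cos θ) - (cos θ - cos θ ^ 3 / 6)) := by ring
      rw [hfactor, abs_mul, ← (by decide : Even 4).pow_abs]
      calc |cos θ| * |sin (cos θ) - (cos θ - cos θ ^ 3 / 6)|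
          ≤ |cos θ| * (|cos θ| ^ 5 / 100) := by gcongr
        _ = 1 / 100 * (|cos θ| ^ 4 * |cos θ| ^ 2) := by ring
        _ ≤ 1 / 100 * (|cos θ| ^ 4 * 1) := by gcongr; exact pow_le_one₀ (abs_nonneg _) hc
        _ = 1 / 100 * |cos θ| ^ 4 := by ring
  rw [hsplit]
  linarith

noncomputable def besselMajorant (x : ℝ) : ℝ :=
  x * (x * (J0 x ^ 2 + J1 x ^ 2) - J0 x * J1 x) / (x - 1 / 2)

theorem hasDerivAt_besselMajorant {x : ℝ} (hx : 1 / 2 < x) :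
    HasDerivAt besselMajorant (-(x * (J0 x - J1 x) ^ 2) / (2 * (x - 1 / 2) ^ 2)) x := by
  have hx0 : x ≠ 0 := by positivity
  have hx2 : x - 1 / 2 ≠ 0 := by linarith
  have hJ0 := hasDerivAt_J0 x
  have hJ1 := hasDerivAt_J1 hx0
  have hid := hasDerivAt_id x
  refine ((hid.mul ((hid.mul ((hJ0.pow 2).add (hJ1.pow 2))).sub (hJ0.mul hJ1))).div
    (hid.sub_const (1 / 2)) hx2).congr_deriv ?_
  simp only [id_eq, Pi.add_apply, Pi.mul_apply, Pi.pow_apply, Pi.sub_apply]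
  field_simp
  ring

theorem antitoneOn_besselMajorant : AntitoneOn besselMajorant (Set.Ioi (1 / 2)) := by
  refine antitoneOn_of_hasDerivWithinAt_nonpos (convex_Ioi _)
    (f' := fun x => -(x * (J0 x - J1 x) ^ 2) / (2 * (x - 1 / 2) ^ 2))
    (fun x hx => (hasDerivAt_besselMajorant hx).continuousAt.continuousWithinAt)
    (fun x hx => ?_) (fun x hx => ?_)
  all_goals rw [interior_Ioi] at hx
  · exact (hasDerivAt_besselMajorant hx).hasDerivWithinAt
  · have hx0 : 0 < x := by linarith [hx.out]
    exact div_nonpos_of_nonpos_of_nonneg (neg_nonpos.2 (by positivity)) (by positivity)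

theorem mul_J1_sq_le_besselMajorant {x : ℝ} (hx : 1 / 2 < x) :
    x * J1 x ^ 2 ≤ besselMajorant x := by
  have hx2 : 0 < x - 1 / 2 := by linarith
  rw [besselMajorant, le_div_iff₀ hx2]
  nlinarith [sq_nonneg (x * J0 x - J1 x / 2), sq_nonneg (J1 x)]

theorem besselMajorant_one_le : besselMajorant 1 ≤ 1 := by
  have h0 := abs_le.1 abs_J0_one_sub_le
  have h1 := abs_le.1 abs_J1_one_sub_le
  have hvalue : besselMajorant 1 = 2 * (J0 1 ^ 2 + J1 1 ^ 2 - J0 1 * J1 1) := by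
    rw [besselMajorant]; ring
  rw [hvalue]
  nlinarith

theorem abs_J1_le_one (x : ℝ) : |J1 x| ≤ 1 := by
  have hint : ‖∫ θ in (0:ℝ)..π, cos θ * sin (x * cos θ)‖ ≤ 1 * |π - 0| :=
    intervalIntegral.norm_integral_le_of_norm_le_const fun θ _ => by
      rw [norm_mul]
      exact mul_le_one₀ (abs_cos_le_one _) (norm_nonneg _) (abs_sin_le_one _)
  rw [J1, abs_mul, abs_of_pos (by positivity), div_mul_eq_mul_div, one_mul,
    div_le_one pi_pos]
  simpa [abs_of_pos pi_pos] using hint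

theorem mul_J1_sq_le_one (x : ℝ) : x * J1 x ^ 2 ≤ 1 := by
  rcases le_total x 1 with hx1 | hx1
  · have hJ1 : J1 x ^ 2 ≤ 1 := by
      rw [← sq_abs]; exact pow_le_one₀ (abs_nonneg _) (abs_J1_le_one x)
    nlinarith
  · calc x * J1 x ^ 2 ≤ besselMajorant x := mul_J1_sq_le_besselMajorant (by linarith)
      _ ≤ besselMajorant 1 :=
          antitoneOn_besselMajorant (by norm_num : (1:ℝ) ∈ Set.Ioi (1 / 2))
            (Set.mem_Ioi.2 (by linarith)) hx1
      _ ≤ 1 := besselMajorant_one_le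

theorem sq_mul_deriv_J0_sq_le {n u : ℝ} (hn : 0 ≤ n) (hu : 0 < u) :
    n ^ 2 * deriv J0 (n * u) ^ 2 ≤ n / u := by
  rw [(hasDerivAt_J0 _).deriv, neg_sq]
  calc n ^ 2 * J1 (n * u) ^ 2 = n / u * (n * u * J1 (n * u) ^ 2) := by field_simp
    _ ≤ n / u * 1 := by gcongr; exact mul_J1_sq_le_one _
    _ = n / u := mul_one _

theorem sq_mul_deriv_J0_sq_mul_rpow_le {n u : ℝ} (hn : 0 ≤ n) (hu : 0 < u) (s : ℝ) :
    n ^ 2 * deriv J0 (n * u) ^ 2 * (1 + n ^ 2) ^ s ≤ (1 + n ^ 2) ^ (s + 1 / 2) / u := by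
  have hpos : 0 < 1 + n ^ 2 := by positivity
  have hn_le : n ≤ (1 + n ^ 2) ^ (1 / 2 : ℝ) := by
    rw [← sqrt_eq_rpow]
    exact le_sqrt_of_sq_le (by linarith)
  calc n ^ 2 * deriv J0 (n * u) ^ 2 * (1 + n ^ 2) ^ s ≤ n / u * (1 + n ^ 2) ^ s := by
        gcongr; exact sq_mul_deriv_J0_sq_le hn hu
    _ ≤ (1 + n ^ 2) ^ (1 / 2 : ℝ) / u * (1 + n ^ 2) ^ s := by gcongr
    _ = (1 + n ^ 2) ^ (s + 1 / 2) / u := by rw [rpow_add hpos]; ring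

theorem ofReal_sq_mul_deriv_J0_sq_mul_rpow_mul_le {n u : ℝ} (hn : 0 ≤ n) (hu : 0 < u)
    (s c : ℝ) :
    ENNReal.ofReal (n ^ 2 * deriv J0 (n * u) ^ 2 * (1 + n ^ 2) ^ s * c)
      ≤ ENNReal.ofReal (1 / u) * ENNReal.ofReal ((1 + n ^ 2) ^ (s + 1 / 2) * c) := by
  rw [ENNReal.ofReal_mul (p := n ^ 2 * deriv J0 (n * u) ^ 2 * (1 + n ^ 2) ^ s) (by positivity),
    ENNReal.ofReal_mul (p := (1 + n ^ 2) ^ (s + 1 / 2)) (by positivity), ← mul_assoc,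
    ← ENNReal.ofReal_mul (p := 1 / u) (by positivity), one_div_mul_eq_div]
  gcongr
  exact sq_mul_deriv_J0_sq_mul_rpow_le hn hu s

theorem gyroaverage_deriv_smoothing_general (u : ℝ) (hu : 0 < u) (s : ℝ)
    (c : {k : ℤ × ℤ // k ≠ 0} → ℝ) :
    ∑' k : {k : ℤ × ℤ // k ≠ 0},
        ENNReal.ofReal (eNorm k.1 ^ 2 * (deriv J0 (eNorm k.1 * u)) ^ 2 *
          (1 + eNorm k.1 ^ 2) ^ s * c k)
      ≤ ENNReal.ofReal (1 / u) *
        ∑' k : {k : ℤ × ℤ // k ≠ 0},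
          ENNReal.ofReal ((1 + eNorm k.1 ^ 2) ^ (s + 1/2) * c k) :=
  (ENNReal.tsum_le_tsum fun k =>
    ofReal_sq_mul_deriv_J0_sq_mul_rpow_mul_le (sqrt_nonneg _) hu s (c k)).trans_eq
    ENNReal.tsum_mul_left

/-- Fourier-coefficient form of the estimate
`‖∂_u (J⁰_u Φ)‖_{H^s} ≤ u^{-1/2} ‖Φ‖_{H^{s+1/2}}` for mean-zero `Φ` on `𝕋²`:
take `c k = |Φ̂(k)|²`. -/
theorem gyroaverage_deriv_smoothing (u : ℝ) (hu : 0 < u) (s : ℝ)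
    (c : {k : ℤ × ℤ // k ≠ 0} → ℝ) (hc : ∀ k, 0 ≤ c k) :
    ∑' k : {k : ℤ × ℤ // k ≠ 0},
        ENNReal.ofReal (eNorm k.1 ^ 2 * (deriv J0 (eNorm k.1 * u)) ^ 2 *
          (1 + eNorm k.1 ^ 2) ^ s * c k)
      ≤ ENNReal.ofReal (1 / u) *
        ∑' k : {k : ℤ × ℤ // k ≠ 0},
          ENNReal.ofReal ((1 + eNorm k.1 ^ 2) ^ (s + 1/2) * c k) :=
  gyroaverage_deriv_smoothing_general u hu s c
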